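/- arXiv:1705.07531 — 2 statements merged into one kernel-verified Lean document; each statement's English description precedes it below -/
import Mathlib

section
/- The Gaussian complexity of C₁(x*,v*) ∩ S^{n+m-1} satisfies γ(C₁ ∩ S^{n+m-1}) ≤ γ(T_f(x*) ∩ S^{n-1}) + γ(T_g(v*) ∩ S^{m-1}), where T_f, T_g are tangent cones of f at x* and g at v*. -/
open MeasureTheory
open scoped RealInnerProductSpace

/-- The standard Gaussian measure on `ℝ^k` (Euclidean space). -/
noncomputable def stdGaussian (k : ℕ) : Measure (EuclideanSpace ℝ (Fin k)) :=
  (Measure.pi fun _ : Fin k => ProbabilityTheory.gaussianReal 0 1).map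
    (⇑(EuclideanSpace.equiv (Fin k) ℝ).symm)

/-- Gaussian complexity of `C ⊆ ℝ^k`. -/
noncomputable def gaussianComplexity {k : ℕ} (C : Set (EuclideanSpace ℝ (Fin k))) : ℝ :=
  ∫ g, (⨆ v : C, |⟪g, (v : EuclideanSpace ℝ (Fin k))⟫|) ∂(stdGaussian k)

/-- Gaussian complexity of a subset of `ℝ^n × ℝ^m`. -/
noncomputable def gaussianComplexity₂ {n m : ℕ}
    (C : Set (EuclideanSpace ℝ (Fin n) × EuclideanSpace ℝ (Fin m))) : ℝ :=
  ∫ p, (⨆ q : C,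
      |⟪p.1, (q : EuclideanSpace ℝ (Fin n) × EuclideanSpace ℝ (Fin m)).1⟫ +
        ⟪p.2, (q : EuclideanSpace ℝ (Fin n) × EuclideanSpace ℝ (Fin m)).2⟫|)
    ∂((stdGaussian n).prod (stdGaussian m))

/-- Tangent cone of `f` at `x`: the set of descent directions. -/
def tangentCone' {k : ℕ} (f : EuclideanSpace ℝ (Fin k) → ℝ) (x : EuclideanSpace ℝ (Fin k)) :
    Set (EuclideanSpace ℝ (Fin k)) :=
  {u | ∃ t : ℝ, 0 < t ∧ f (x + t • u) ≤ f x}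

/-!
Tangent cones are closed under positive scaling. So if `(a, b)` lies in `C₁` with
`‖a‖² + ‖b‖² = 1`, then `‖a‖, ‖b‖ ≤ 1` and rescaling `a` onto the sphere gives
`|⟪g₁, a⟫| ≤ sup_{u ∈ T_f ∩ S} |⟪g₁, u⟫|`, and likewise for `b`. The triangle inequality bounds the
integrand of `γ(C₁ ∩ S)` by a sum of a function of `g₁` and one of `g₂`, whose integral over the
product measure splits. Integrability holds because these suprema are 1-Lipschitz and bounded by
`‖g‖`, which is integrable for a Gaussian measure.
-/

lemma inter_sphere_subset_closedBall {E : Type*} [SeminormedAddCommGroup E] (K : Set E) :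
    K ∩ Metric.sphere 0 1 ⊆ Metric.closedBall 0 1 :=
  Set.inter_subset_right.trans Metric.sphere_subset_closedBall

section SupAbsInner

variable {E : Type*} [NormedAddCommGroup E] [InnerProductSpace ℝ E]

/-- `gaussianComplexity C` is definitionally `∫ x, supAbsInner C x ∂(stdGaussian k)`. -/
noncomputable def supAbsInner (C : Set E) (x : E) : ℝ :=
  ⨆ v : C, |⟪x, (v : E)⟫|

variable {C : Set E}

lemma supAbsInner_nonneg (x : E) : 0 ≤ supAbsInner C x :=
  Real.iSup_nonneg fun _ => abs_nonneg _

lemma supAbsInner_le {x : E} {a : ℝ} (h : ∀ v ∈ C, |⟪x, v⟫| ≤ a) (ha : 0 ≤ a) :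
    supAbsInner C x ≤ a :=
  Real.iSup_le (fun v => h v v.2) ha

lemma abs_inner_le_norm_of_mem (hC : C ⊆ Metric.closedBall 0 1) (x : E) {v : E} (hv : v ∈ C) :
    |⟪x, v⟫| ≤ ‖x‖ :=
  (abs_real_inner_le_norm x v).trans <|
    mul_le_of_le_one_right (norm_nonneg x) (mem_closedBall_zero_iff.mp (hC hv))

lemma abs_inner_le_supAbsInner (hC : C ⊆ Metric.closedBall 0 1) (x : E) {v : E} (hv : v ∈ C) :
    |⟪x, v⟫| ≤ supAbsInner C x :=
  le_ciSup ⟨‖x‖, by rintro _ ⟨w, rfl⟩; exact abs_inner_le_norm_of_mem hC x w.2⟩ (⟨v, hv⟩ : C)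

lemma supAbsInner_le_norm (hC : C ⊆ Metric.closedBall 0 1) (x : E) : supAbsInner C x ≤ ‖x‖ :=
  supAbsInner_le (fun _ hv => abs_inner_le_norm_of_mem hC x hv) (norm_nonneg x)

lemma lipschitzWith_supAbsInner (hC : C ⊆ Metric.closedBall 0 1) :
    LipschitzWith 1 (supAbsInner C) := by
  have key : ∀ x y : E, supAbsInner C x ≤ supAbsInner C y + dist x y := fun x y =>
    supAbsInner_le (fun v hv => calc
        |⟪x, v⟫| = |⟪y, v⟫ + ⟪x - y, v⟫| := by rw [← inner_add_left, add_sub_cancel]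
        _ ≤ |⟪y, v⟫| + |⟪x - y, v⟫| := abs_add_le _ _
        _ ≤ supAbsInner C y + dist x y := by
          rw [dist_eq_norm]
          exact add_le_add (abs_inner_le_supAbsInner hC y hv) (abs_inner_le_norm_of_mem hC _ hv))
      (add_nonneg (supAbsInner_nonneg y) dist_nonneg)
  refine LipschitzWith.of_le_add fun x y => ?_
  simpa only [dist_comm] using key x y

lemma integrable_supAbsInner [MeasurableSpace E] [OpensMeasurableSpace E] {μ : Measure E}
    (hμ : Integrable id μ) (hC : C ⊆ Metric.closedBall 0 1) : Integrable (supAbsInner C) μ :=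
  hμ.norm.mono' (lipschitzWith_supAbsInner hC).continuous.aestronglyMeasurable
    (ae_of_all _ fun x => by
      rw [Real.norm_of_nonneg (supAbsInner_nonneg x)]
      exact supAbsInner_le_norm hC x)

lemma abs_inner_le_supAbsInner_inter_sphere {K : Set E}
    (hK : ∀ c : ℝ, 0 < c → ∀ u ∈ K, c • u ∈ K) (x : E) {a : E} (ha : a ∈ K) (ha1 : ‖a‖ ≤ 1) :
    |⟪x, a⟫| ≤ supAbsInner (K ∩ Metric.sphere 0 1) x := by
  rcases eq_or_ne a 0 with rfl | ha0
  · simpa using supAbsInner_nonneg x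
  have hpos : 0 < ‖a‖ := norm_pos_iff.mpr ha0
  have hunit : ‖a‖⁻¹ • a ∈ K ∩ Metric.sphere 0 1 :=
    ⟨hK _ (inv_pos.mpr hpos) a ha, by simp [norm_smul, hpos.ne']⟩
  calc |⟪x, a⟫| = ‖a‖ * |⟪x, ‖a‖⁻¹ • a⟫| := by
        rw [real_inner_smul_right, abs_mul, abs_inv, abs_norm, mul_inv_cancel_left₀ hpos.ne']
    _ ≤ 1 * supAbsInner (K ∩ Metric.sphere 0 1) x :=
        mul_le_mul ha1 (abs_inner_le_supAbsInner (inter_sphere_subset_closedBall K) x hunit)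
          (abs_nonneg _) zero_le_one
    _ = supAbsInner (K ∩ Metric.sphere 0 1) x := one_mul _

end SupAbsInner

lemma smul_mem_tangentCone' {k : ℕ} {f : EuclideanSpace ℝ (Fin k) → ℝ}
    {x u : EuclideanSpace ℝ (Fin k)} {c : ℝ} (hc : 0 < c) (hu : u ∈ tangentCone' f x) :
    c • u ∈ tangentCone' f x := by
  obtain ⟨t, ht, hle⟩ := hu
  exact ⟨t / c, div_pos ht hc, by rwa [smul_smul, div_mul_cancel₀ _ hc.ne']⟩

lemma stdGaussian_eq_stdGaussian_euclideanSpace (k : ℕ) :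
    stdGaussian k = ProbabilityTheory.stdGaussian (EuclideanSpace ℝ (Fin k)) :=
  ProbabilityTheory.map_pi_eq_stdGaussian

instance isGaussian_stdGaussian_euclideanSpace (k : ℕ) :
    ProbabilityTheory.IsGaussian (stdGaussian k) := by
  rw [stdGaussian_eq_stdGaussian_euclideanSpace]
  infer_instance

lemma iSup_abs_inner_add_inner_le {E F : Type*} [NormedAddCommGroup E] [InnerProductSpace ℝ E]
    [NormedAddCommGroup F] [InnerProductSpace ℝ F] {K : Set E} {L : Set F}
    (hK : ∀ c : ℝ, 0 < c → ∀ u ∈ K, c • u ∈ K) (hL : ∀ c : ℝ, 0 < c → ∀ u ∈ L, c • u ∈ L)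
    (x : E) (y : F) :
    ⨆ q : ({p : E × F | p.1 ∈ K ∧ p.2 ∈ L} ∩ {p | ‖p.1‖ ^ 2 + ‖p.2‖ ^ 2 = 1} : Set (E × F)),
        |⟪x, (q : E × F).1⟫ + ⟪y, (q : E × F).2⟫| ≤
      supAbsInner (K ∩ Metric.sphere 0 1) x + supAbsInner (L ∩ Metric.sphere 0 1) y := by
  refine Real.iSup_le ?_ (add_nonneg (supAbsInner_nonneg x) (supAbsInner_nonneg y))
  rintro ⟨⟨a, b⟩, ⟨ha, hb⟩, hab⟩
  have ha1 : ‖a‖ ≤ 1 := by nlinarith [norm_nonneg a, sq_nonneg ‖b‖, hab.le]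
  have hb1 : ‖b‖ ≤ 1 := by nlinarith [norm_nonneg b, sq_nonneg ‖a‖, hab.le]
  exact (abs_add_le _ _).trans <| add_le_add
    (abs_inner_le_supAbsInner_inter_sphere hK x ha ha1)
    (abs_inner_le_supAbsInner_inter_sphere hL y hb hb1)

lemma integral_prod_comp_fst_add_comp_snd {α β : Type*} [MeasurableSpace α] [MeasurableSpace β]
    {μ : Measure α} {ν : Measure β} [IsProbabilityMeasure μ] [IsProbabilityMeasure ν]
    {φ : α → ℝ} {ψ : β → ℝ} (hφ : Integrable φ μ) (hψ : Integrable ψ ν) :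
    ∫ p, (φ p.1 + ψ p.2) ∂μ.prod ν = ∫ x, φ x ∂μ + ∫ y, ψ y ∂ν := by
  rw [integral_add (hφ.comp_fst ν) (hψ.comp_snd μ), integral_fun_fst, integral_fun_snd]
  simp

theorem gaussianComplexity_cone_one_bound_general {n m : ℕ}
    (f : EuclideanSpace ℝ (Fin n) → ℝ) (g : EuclideanSpace ℝ (Fin m) → ℝ)
    (xs : EuclideanSpace ℝ (Fin n)) (vs : EuclideanSpace ℝ (Fin m)) :
    gaussianComplexity₂
        ({p : EuclideanSpace ℝ (Fin n) × EuclideanSpace ℝ (Fin m) |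
            p.1 ∈ tangentCone' f xs ∧ p.2 ∈ tangentCone' g vs} ∩
          {p | ‖p.1‖ ^ 2 + ‖p.2‖ ^ 2 = 1}) ≤
      gaussianComplexity (tangentCone' f xs ∩ Metric.sphere 0 1) +
        gaussianComplexity (tangentCone' g vs ∩ Metric.sphere 0 1) := by
  have hA : Integrable (supAbsInner (tangentCone' f xs ∩ Metric.sphere 0 1)) (stdGaussian n) :=
    integrable_supAbsInner ProbabilityTheory.IsGaussian.integrable_id
      (inter_sphere_subset_closedBall _)
  have hB : Integrable (supAbsInner (tangentCone' g vs ∩ Metric.sphere 0 1)) (stdGaussian m) :=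
    integrable_supAbsInner ProbabilityTheory.IsGaussian.integrable_id
      (inter_sphere_subset_closedBall _)
  calc _ ≤ ∫ p, (supAbsInner (tangentCone' f xs ∩ Metric.sphere 0 1) p.1 +
          supAbsInner (tangentCone' g vs ∩ Metric.sphere 0 1) p.2)
          ∂(stdGaussian n).prod (stdGaussian m) :=
        integral_mono_of_nonneg (ae_of_all _ fun _ => Real.iSup_nonneg fun _ => abs_nonneg _)
          ((hA.comp_fst _).add (hB.comp_snd _))
          (ae_of_all _ fun p => iSup_abs_inner_add_inner_le (fun _ hc _ => smul_mem_tangentCone' hc)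
            (fun _ hc _ => smul_mem_tangentCone' hc) p.1 p.2)
    _ = _ := integral_prod_comp_fst_add_comp_snd hA hB

/-- `γ(C₁ ∩ S^{n+m-1}) ≤ γ(T_f(x*) ∩ S^{n-1}) + γ(T_g(v*) ∩ S^{m-1})`. -/
theorem gaussianComplexity_cone_one_bound {n m : ℕ}
    (f : EuclideanSpace ℝ (Fin n) → ℝ) (g : EuclideanSpace ℝ (Fin m) → ℝ)
    -- f and g are norms:
    (hf_add : ∀ x y, f (x + y) ≤ f x + f y)
    (hf_smul : ∀ (c : ℝ) x, f (c • x) = |c| * f x)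
    (hf_pos : ∀ x, x ≠ 0 → 0 < f x)
    (hg_add : ∀ x y, g (x + y) ≤ g x + g y)
    (hg_smul : ∀ (c : ℝ) x, g (c • x) = |c| * g x)
    (hg_pos : ∀ x, x ≠ 0 → 0 < g x)
    (xs : EuclideanSpace ℝ (Fin n)) (vs : EuclideanSpace ℝ (Fin m))
    (hfne : (tangentCone' f xs ∩ Metric.sphere 0 1).Nonempty)
    (hgne : (tangentCone' g vs ∩ Metric.sphere 0 1).Nonempty) :
    gaussianComplexity₂
        ({p : EuclideanSpace ℝ (Fin n) × EuclideanSpace ℝ (Fin m) |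
            p.1 ∈ tangentCone' f xs ∧ p.2 ∈ tangentCone' g vs} ∩
          {p | ‖p.1‖ ^ 2 + ‖p.2‖ ^ 2 = 1}) ≤
      gaussianComplexity (tangentCone' f xs ∩ Metric.sphere 0 1) +
        gaussianComplexity (tangentCone' g vs ∩ Metric.sphere 0 1) :=
  gaussianComplexity_cone_one_bound_general f g xs vs
end

section
/- Suppose τ₁ ≥ β·f*(Φᵀz) and τ₂ ≥ β·g*(z) for some β > 1, and (x̂,v̂) satisfies the optimality inequality (1/2)‖Φ(x̂−x*)+(v̂−v*)‖₂² ≤ τ₁[f(x*)−f(x̂)] + τ₂[g(v*)−g(v̂)] + ⟨Φ(x̂−x*),z⟩ + ⟨v̂−v*,z⟩. Then τ₁f(x̂) + τ₂g(v̂) ≤ τ₁f(x*) + τ₂g(v*) + (τ₁/β)f(x̂−x*) + (τ₂/β)g(v̂−v*). -/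
/-! The optimality inequality has a nonnegative quadratic left-hand side, and Hölder's inequality
for the dual norm bounds its two linear terms by `(τ₁/β) f(x̂ - x*)` and `(τ₂/β) g(v̂ - v*)`.
Hölder's inequality needs the supremum defining `f*` to be finite: since `f` is continuous
(being convex on a finite-dimensional space) and positive on the compact unit sphere, it dominates
a positive multiple of the sup norm. -/

open Finset

/-- Dual norm: `f*(w) = sup {⟨w,u⟩ : f(u) ≤ 1}` (Euclidean dot product). -/
noncomputable def dualNorm {n : ℕ} (f : (Fin n → ℝ) → ℝ) (w : Fin n → ℝ) : ℝ :=
  sSup {y | ∃ u : Fin n → ℝ, f u ≤ 1 ∧ y = ∑ i, w i * u i}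

theorem Seminorm.exists_pos_mul_norm_le {E : Type*} [NormedAddCommGroup E] [NormedSpace ℝ E]
    [FiniteDimensional ℝ E] (p : Seminorm ℝ E) (hp : ∀ x, x ≠ 0 → 0 < p x) :
    ∃ c, 0 < c ∧ ∀ u, c * ‖u‖ ≤ p u := by
  have hcont : Continuous p := p.convexOn.locallyLipschitz.continuous
  obtain ⟨c, hc, hcp⟩ := (isCompact_sphere (0 : E) 1).exists_forall_le' hcont.continuousOn
    fun u hu => hp u (ne_zero_of_mem_unit_sphere ⟨u, hu⟩)
  refine ⟨c, hc, fun u => ?_⟩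
  rcases eq_or_ne u 0 with rfl | hu
  · simp
  have hnorm : 0 < ‖u‖ := norm_pos_iff.mpr hu
  have hunit : ‖u‖⁻¹ • u ∈ Metric.sphere (0 : E) 1 := by
    simp [norm_smul, hnorm.ne']
  have := hcp _ hunit
  rw [map_smul_eq_mul, norm_inv, norm_norm] at this
  rwa [le_inv_mul_iff₀ hnorm, mul_comm] at this

section DualNorm

variable {n : ℕ} (p : Seminorm ℝ (Fin n → ℝ))

theorem bddAbove_dualNorm_set (hp : ∀ x, x ≠ 0 → 0 < p x) (w : Fin n → ℝ) :
    BddAbove {y | ∃ u : Fin n → ℝ, p u ≤ 1 ∧ y = ∑ i, w i * u i} := by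
  obtain ⟨c, hc, hcp⟩ := p.exists_pos_mul_norm_le hp
  refine (((isCompact_closedBall (0 : Fin n → ℝ) c⁻¹).image
    (f := fun u => ∑ i, w i * u i) (by fun_prop)).bddAbove).mono ?_
  rintro _ ⟨u, hu, rfl⟩
  refine ⟨u, ?_, rfl⟩
  rw [mem_closedBall_zero_iff, ← one_div, le_div_iff₀ hc]
  linarith [hcp u]

theorem dotProduct_le_dualNorm_mul (hp : ∀ x, x ≠ 0 → 0 < p x) (w u : Fin n → ℝ) :
    w ⬝ᵥ u ≤ dualNorm p w * p u := by
  rcases eq_or_ne u 0 with rfl | hu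
  · simp
  have hpu : 0 < p u := hp u hu
  have hmem : w ⬝ᵥ ((p u)⁻¹ • u) ∈ {y | ∃ v : Fin n → ℝ, p v ≤ 1 ∧ y = ∑ i, w i * v i} :=
    ⟨(p u)⁻¹ • u, by simp [map_smul_eq_mul, abs_of_pos hpu, hpu.ne'], rfl⟩
  have := le_csSup (bddAbove_dualNorm_set p hp w) hmem
  rw [dotProduct_smul, smul_eq_mul, inv_mul_le_iff₀ hpu] at this
  rwa [mul_comm]

theorem dotProduct_le_div_mul_of_mul_dualNorm_le (hp : ∀ x, x ≠ 0 → 0 < p x) {w : Fin n → ℝ}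
    {τ β : ℝ} (hβ : 0 < β) (hτ : τ ≥ β * dualNorm p w) (u : Fin n → ℝ) : w ⬝ᵥ u ≤ τ / β * p u := by
  have hdual : dualNorm p w ≤ τ / β := by rw [le_div_iff₀ hβ]; linarith
  exact (dotProduct_le_dualNorm_mul p hp w u).trans
    (mul_le_mul_of_nonneg_right hdual (apply_nonneg p u))

end DualNorm

theorem penalized_norm_inequality_general {n m : ℕ}
    (Φ : Matrix (Fin m) (Fin n) ℝ) (z : Fin m → ℝ)
    (f : (Fin n → ℝ) → ℝ) (g : (Fin m → ℝ) → ℝ)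
    -- f and g are norms:
    (hf_add : ∀ x y, f (x + y) ≤ f x + f y)
    (hf_smul : ∀ (c : ℝ) x, f (c • x) = |c| * f x)
    (hf_pos : ∀ x, x ≠ 0 → 0 < f x)
    (hg_add : ∀ x y, g (x + y) ≤ g x + g y)
    (hg_smul : ∀ (c : ℝ) x, g (c • x) = |c| * g x)
    (hg_pos : ∀ x, x ≠ 0 → 0 < g x)
    (τ₁ τ₂ β : ℝ) (hβ : 1 < β)
    (hτ₁' : τ₁ ≥ β * dualNorm f (Φ.transpose.mulVec z))
    (hτ₂' : τ₂ ≥ β * dualNorm g z)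
    (xh xs : Fin n → ℝ) (vh vs : Fin m → ℝ)
    (hopt : (1/2) * (∑ i, (Φ.mulVec (xh - xs) + (vh - vs)) i ^ 2) ≤
      τ₁ * (f xs - f xh) + τ₂ * (g vs - g vh) +
      (∑ i, Φ.mulVec (xh - xs) i * z i) + (∑ i, (vh - vs) i * z i)) :
    τ₁ * f xh + τ₂ * g vh ≤
      τ₁ * f xs + τ₂ * g vs + (τ₁ / β) * f (xh - xs) + (τ₂ / β) * g (vh - vs) := by
  have hβ0 : 0 < β := by linarith
  have hx : Φ.mulVec (xh - xs) ⬝ᵥ z ≤ τ₁ / β * f (xh - xs) := by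
    rw [dotProduct_comm, Matrix.dotProduct_mulVec, ← Matrix.mulVec_transpose]
    exact dotProduct_le_div_mul_of_mul_dualNorm_le (.of f hf_add hf_smul) hf_pos hβ0 hτ₁' _
  have hv : (vh - vs) ⬝ᵥ z ≤ τ₂ / β * g (vh - vs) := by
    rw [dotProduct_comm]
    exact dotProduct_le_div_mul_of_mul_dualNorm_le (.of g hg_add hg_smul) hg_pos hβ0 hτ₂' _
  have hsq : 0 ≤ ∑ i, (Φ.mulVec (xh - xs) + (vh - vs)) i ^ 2 := sum_nonneg fun i _ => sq_nonneg _
  change _ ≤ _ + Φ.mulVec (xh - xs) ⬝ᵥ z + (vh - vs) ⬝ᵥ z at hopt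
  linarith

/-- under the regularization-parameter assumption, the penalized
objective values satisfy the stated inequality. -/
theorem penalized_norm_inequality {n m : ℕ}
    (Φ : Matrix (Fin m) (Fin n) ℝ) (z : Fin m → ℝ)
    (f : (Fin n → ℝ) → ℝ) (g : (Fin m → ℝ) → ℝ)
    -- f and g are norms:
    (hf_add : ∀ x y, f (x + y) ≤ f x + f y)
    (hf_smul : ∀ (c : ℝ) x, f (c • x) = |c| * f x)
    (hf_pos : ∀ x, x ≠ 0 → 0 < f x)
    (hg_add : ∀ x y, g (x + y) ≤ g x + g y)
    (hg_smul : ∀ (c : ℝ) x, g (c • x) = |c| * g x)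
    (hg_pos : ∀ x, x ≠ 0 → 0 < g x)
    (τ₁ τ₂ β : ℝ) (hτ₁ : 0 < τ₁) (hτ₂ : 0 < τ₂) (hβ : 1 < β)
    (hτ₁' : τ₁ ≥ β * dualNorm f (Φ.transpose.mulVec z))
    (hτ₂' : τ₂ ≥ β * dualNorm g z)
    (xh xs : Fin n → ℝ) (vh vs : Fin m → ℝ)
    (hopt : (1/2) * (∑ i, (Φ.mulVec (xh - xs) + (vh - vs)) i ^ 2) ≤
      τ₁ * (f xs - f xh) + τ₂ * (g vs - g vh) +
      (∑ i, Φ.mulVec (xh - xs) i * z i) + (∑ i, (vh - vs) i * z i)) :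
    τ₁ * f xh + τ₂ * g vh ≤
      τ₁ * f xs + τ₂ * g vs + (τ₁ / β) * f (xh - xs) + (τ₂ / β) * g (vh - vs) :=
  penalized_norm_inequality_general Φ z f g hf_add hf_smul hf_pos hg_add hg_smul hg_pos τ₁ τ₂ β hβ
    hτ₁' hτ₂' xh xs vh vs hopt
end
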